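/- For a Pólya urn started with b black and w white balls, the conditional distribution of the draws given Z = p is that of i.i.d. Bernoulli(p) draws: for any 0-1 sequence (ε_1,…,ε_n) with k ones, P(draws = (ε_1,…,ε_n)) = ∫_0^1 p^k (1-p)^{n-k} Beta_{b,w}(p) dp. -/

import Mathlib

open MeasureTheory ProbabilityTheory Filter

/-- The density of the Beta(b,w) distribution. -/
noncomputable def betaDensity (b w : ℕ) (p : ℝ) : ℝ :=
  Real.Gamma (b + w) / (Real.Gamma b * Real.Gamma w) * p ^ (b - 1) * (1 - p) ^ (w - 1)

/-- The CDF of the Beta(b,w) distribution. -/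
noncomputable def betaCDF (b w : ℕ) (x : ℝ) : ℝ :=
  ∫ p in Set.Ioo (0 : ℝ) x, betaDensity b w p

/-- The event that the first draws are exactly the sequence `ε` (`true` = black). -/
def drawsEq {Ω : Type*} (X : ℕ → Ω → Bool) (ε : List Bool) : Set Ω :=
  {ω | List.ofFn (fun i : Fin ε.length => X (i : ℕ) ω) = ε}

/-- `X` is the draw process of a Pólya urn started with `b` black and `w` white balls:
given any history `ε` of draws, the next ball drawn is black with probability
(current number of black balls)/(current total number of balls). -/
def IsPolyaUrn {Ω : Type*} [MeasurableSpace Ω] (P : Measure Ω)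
    (X : ℕ → Ω → Bool) (b w : ℕ) : Prop :=
  (∀ i, Measurable (X i)) ∧
  ∀ ε : List Bool,
    P (drawsEq X (ε ++ [true])) =
      ENNReal.ofReal (((b : ℝ) + ε.count true) / ((b : ℝ) + w + ε.length)) *
        P (drawsEq X ε)

/-- Number of black balls in the urn after `n` draws. -/
def blackCount {Ω : Type*} (X : ℕ → Ω → Bool) (b n : ℕ) (ω : Ω) : ℕ :=
  b + ((Finset.range n).filter fun i => X i ω = true).card

/-- Number of white balls in the urn after `n` draws. -/
def whiteCount {Ω : Type*} (X : ℕ → Ω → Bool) (w n : ℕ) (ω : Ω) : ℕ :=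
  w + ((Finset.range n).filter fun i => X i ω = false).card

/-!
Writing `B` for the Beta function, both sides equal `B(b + k, w + n - k) / B(b, w)`, where `n` is
the length of `ε` and `k` its number of black draws. On the mixture side this is Euler's Beta
integral. On the urn side it follows by induction on `n`: appending a black draw multiplies the
probability by `(b + k) / (b + w + n)`, which is `B(x + 1, y) / B(x, y) = x / (x + y)`; the
probability of appending a white draw is then the remainder, matching
`B(x + 1, y) + B(x, y + 1) = B(x, y)`.
-/

open Set

namespace ProbabilityTheory

lemma beta_add_one_left {α β : ℝ} (hα : 0 < α) (hβ : 0 < β) :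
    beta (α + 1) β = α / (α + β) * beta α β := by
  have := Real.Gamma_pos_of_pos (add_pos hα hβ)
  rw [beta, beta, add_right_comm, Real.Gamma_add_one hα.ne', Real.Gamma_add_one (by positivity)]
  field_simp

lemma beta_add_one_left_add_beta_add_one_right {α β : ℝ} (hα : 0 < α) (hβ : 0 < β) :
    beta (α + 1) β + beta α (β + 1) = beta α β := by
  have := Real.Gamma_pos_of_pos (add_pos hα hβ)
  rw [beta, beta, beta, add_right_comm, ← add_assoc, Real.Gamma_add_one hα.ne',
    Real.Gamma_add_one hβ.ne', Real.Gamma_add_one (by positivity)]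
  field_simp

lemma integral_Ioo_pow_mul_one_sub_pow (a c : ℕ) :
    ∫ x in Ioo (0 : ℝ) 1, x ^ a * (1 - x) ^ c = beta (a + 1) (c + 1) := by
  rw [beta_eq_betaIntegralReal _ _ (by positivity) (by positivity), Complex.betaIntegral,
    ← integral_Ioc_eq_integral_Ioo, ← intervalIntegral.integral_of_le zero_le_one]
  have hintegrand : ∀ x : ℝ, ((x : ℂ) ^ (((a + 1 : ℝ) : ℂ) - 1) * (1 - (x : ℂ)) ^ (((c + 1 : ℝ) : ℂ) - 1))
      = ((x ^ a * (1 - x) ^ c : ℝ) : ℂ) := by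
    intro x
    push_cast
    simp only [add_sub_cancel_right, Complex.cpow_natCast]
  simp_rw [hintegrand, intervalIntegral.integral_ofReal, Complex.ofReal_re]

end ProbabilityTheory

open ProbabilityTheory

lemma betaDensity_eq_div_beta (b w : ℕ) (p : ℝ) :
    betaDensity b w p = p ^ (b - 1) * (1 - p) ^ (w - 1) / beta b w := by
  rw [betaDensity, beta, div_div_eq_mul_div]
  ring

lemma integral_pow_mul_one_sub_pow_mul_betaDensity {b w : ℕ} (hb : 1 ≤ b) (hw : 1 ≤ w)
    (k m : ℕ) :
    ∫ p in Ioo (0 : ℝ) 1, p ^ k * (1 - p) ^ m * betaDensity b w p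
      = beta (b + k) (w + m) / beta b w := by
  obtain ⟨b, rfl⟩ := Nat.exists_eq_add_of_le' hb
  obtain ⟨w, rfl⟩ := Nat.exists_eq_add_of_le' hw
  have hintegrand : ∀ p : ℝ, p ^ k * (1 - p) ^ m * betaDensity (b + 1) (w + 1) p
      = p ^ (b + k) * (1 - p) ^ (w + m) / beta (b + 1 : ℕ) (w + 1 : ℕ) := by
    intro p
    rw [betaDensity_eq_div_beta, Nat.add_sub_cancel, Nat.add_sub_cancel, pow_add, pow_add]
    ring
  simp_rw [hintegrand]
  rw [integral_div, integral_Ioo_pow_mul_one_sub_pow]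
  push_cast
  rw [add_right_comm (b : ℝ), add_right_comm (w : ℝ)]

section Draws

variable {Ω : Type*} (X : ℕ → Ω → Bool)

@[simp]
lemma drawsEq_nil : drawsEq X [] = univ := by
  ext ω; simp [drawsEq]

lemma drawsEq_append_singleton (ε : List Bool) (c : Bool) :
    drawsEq X (ε ++ [c]) = drawsEq X ε ∩ X ε.length ⁻¹' {c} := by
  ext ω
  simp only [drawsEq, mem_ofPred_eq, mem_inter_iff, mem_preimage, mem_singleton_iff]
  rw [List.ofFn_congr (List.length_append ..), List.ofFn_succ', List.concat_eq_append]
  simp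

variable [MeasurableSpace Ω]

lemma measure_drawsEq_eq_add (μ : Measure Ω) (hX : ∀ i, Measurable (X i)) (ε : List Bool) :
    μ (drawsEq X ε) = μ (drawsEq X (ε ++ [true])) + μ (drawsEq X (ε ++ [false])) := by
  have hdiff : drawsEq X ε \ X ε.length ⁻¹' {true} = drawsEq X (ε ++ [false]) := by
    ext ω
    simp [drawsEq_append_singleton]
  rw [drawsEq_append_singleton X ε true, ← hdiff]
  exact (measure_inter_add_sdiff _ (hX _ (measurableSet_singleton true))).symm

end Draws

lemma IsPolyaUrn.measure_drawsEq {Ω : Type*} [MeasurableSpace Ω] {P : Measure Ω}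
    [IsProbabilityMeasure P] {X : ℕ → Ω → Bool} {b w : ℕ} (hb : 1 ≤ b) (hw : 1 ≤ w)
    (hX : IsPolyaUrn P X b w) (ε : List Bool) :
    P (drawsEq X ε) =
      ENNReal.ofReal (beta (b + ε.count true) (w + ε.count false) / beta b w) := by
  have hb' : (0 : ℝ) < b := by exact_mod_cast hb
  have hw' : (0 : ℝ) < w := by exact_mod_cast hw
  have hratio_nonneg {x y : ℝ} (hx : 0 < x) (hy : 0 < y) : 0 ≤ beta x y / beta b w :=
    div_nonneg (beta_pos hx hy).le (beta_pos hb' hw').le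
  induction ε using List.reverseRecOn with
  | nil => simp [div_self (beta_pos hb' hw').ne']
  | append_singleton ε c ih =>
    have htrue : P (drawsEq X (ε ++ [true])) =
        ENNReal.ofReal (beta (b + ε.count true + 1) (w + ε.count false) / beta b w) := by
      rw [hX.2, ih, ← ENNReal.ofReal_mul (by positivity),
        beta_add_one_left (by positivity) (by positivity), ← List.count_false_add_count_true ε]
      congr 1
      push_cast
      ring
    cases c with
    | true => simpa [add_assoc] using htrue
    | false =>
      have hsplit := measure_drawsEq_eq_add X P hX.1 ε
      rw [ih, htrue, ← beta_add_one_left_add_beta_add_one_right (by positivity) (by positivity),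
        add_div, ENNReal.ofReal_add (hratio_nonneg (by positivity) (by positivity))
          (hratio_nonneg (by positivity) (by positivity))] at hsplit
      simpa [add_assoc] using (ENNReal.add_right_inj ENNReal.ofReal_ne_top).mp hsplit.symm

/-- De Finetti representation of the Pólya urn: the probability of a draw sequence `ε`
with `k` black draws is a Beta(b,w)-mixture of Bernoulli product probabilities. -/
theorem polya_deFinetti {Ω : Type*} [MeasurableSpace Ω] (P : Measure Ω)
    [IsProbabilityMeasure P] (X : ℕ → Ω → Bool) (b w : ℕ)
    (hb : 1 ≤ b) (hw : 1 ≤ w) (hX : IsPolyaUrn P X b w) (ε : List Bool) :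
    P (drawsEq X ε) =
      ENNReal.ofReal (∫ p in Set.Ioo (0 : ℝ) 1,
        p ^ ε.count true * (1 - p) ^ (ε.length - ε.count true) * betaDensity b w p) := by
  have hcount : ε.length - ε.count true = ε.count false := by
    rw [← List.count_false_add_count_true]; omega
  rw [hX.measure_drawsEq hb hw, hcount, integral_pow_mul_one_sub_pow_mul_betaDensity hb hw]
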